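/- arXiv:1110.2047 — 2 statements merged into one kernel-verified Lean document; each statement's English description precedes it below -/
import Mathlib

section
/- (Raabe-type multiplication formula, order one.) Let m ≥ 1 be an integer. For every n ≥ 0 and every real x: Y_{n,β}(mx;k,a,b) = m^{n−k}·a^{b(m−1)}·∑_{j=0}^{m−1} (β^b/a^b)^j·Ỹ_n(x + j/m), where m^{n−k} := m^n/m^k and (Ỹ_n)_{n≥0} is the family of polynomials attached to the parameters (β^m, a^m), i.e., the polynomials satisfying ((β^b)^m·e^t − (a^b)^m)·∑_{n≥0} Ỹ_n(x)·tⁿ/n! = 2^{1−k}·t^k·e^{xt} as formal power series in t. -/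
open Polynomial

/-- The exponential generating series `e^{xt} = ∑_{n≥0} xⁿ tⁿ/n!` as a formal power series
in `t` with coefficients in `ℂ[x]`. -/
noncomputable def expX : PowerSeries (Polynomial ℂ) :=
  PowerSeries.mk fun n => (n.factorial : ℂ)⁻¹ • (Polynomial.X : Polynomial ℂ) ^ n

/-- The exponential generating series `∑_{n≥0} Y_n tⁿ/n!` of a family of polynomials. -/
noncomputable def egf (Y : ℕ → Polynomial ℂ) : PowerSeries (Polynomial ℂ) :=
  PowerSeries.mk fun n => (n.factorial : ℂ)⁻¹ • Y n

/-- The defining identity for the unified Apostol-type polynomials with general constants: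
`(B·e^t − A)^v · ∑_{n≥0} Y_n tⁿ/n! = (2^{1−k} t^k)^v · e^{xt}` as formal power series in `t`
over `ℂ[x]`. -/
def ApostolFamilyC (k v : ℕ) (B A : ℂ) (Y : ℕ → Polynomial ℂ) : Prop :=
  (PowerSeries.C (R := Polynomial ℂ) (Polynomial.C B) * PowerSeries.exp (Polynomial ℂ)
      - PowerSeries.C (R := Polynomial ℂ) (Polynomial.C A)) ^ v * egf Y
    = (PowerSeries.C (R := Polynomial ℂ) (Polynomial.C ((2 : ℂ) ^ ((1 : ℤ) - (k : ℤ)))) *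
        PowerSeries.X ^ k) ^ v * expX

/-- `Y` is the family of unified Apostol-type polynomials `Y_{n,β}^{(v)}(x;k,a,b)`:
here `β^b = exp(b·Log β)` is the principal complex power and `a^b` the real power. -/
def ApostolFamily (k v : ℕ) (a b : ℝ) (β : ℂ) (Y : ℕ → Polynomial ℂ) : Prop :=
  ApostolFamilyC k v (β ^ (b : ℂ)) (((a ^ b : ℝ) : ℂ)) Y

/-!
Evaluate the generating functions at a point, so that the defining identities become identities
in the domain `ℂ⟦t⟧`. Let `F` be the series of `Y` at `m x` and `G_j` that of `Ỹ` at `x + j/m`.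
Substituting `t ↦ m t` gives `(Bᵐ e^{mt} − Aᵐ) G_j(mt) = 2^{1−k} mᵏ tᵏ e^{mxt} e^{jt}`, while the
factorisation `Bᵐ e^{mt} − Aᵐ = (B eᵗ − A) ∑_j Bʲ e^{jt} A^{m−1−j}` gives
`(Bᵐ e^{mt} − Aᵐ) F(t) = 2^{1−k} tᵏ e^{mxt} ∑_j Bʲ A^{m−1−j} e^{jt}`. Cancelling the nonzero factor
`Bᵐ e^{mt} − Aᵐ` yields `mᵏ F(t) = ∑_j Bʲ A^{m−1−j} G_j(mt)`, and comparing the coefficients of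
`tⁿ` is the theorem.
-/

open PowerSeries

namespace PowerSeries

theorem rescale_C {R : Type*} [CommSemiring R] (a c : R) : rescale a (C c) = C c := by
  ext n
  cases n <;> simp [coeff_rescale, coeff_C]

theorem C_mul_rescale_exp_sub_C_ne_zero {K : Type*} [Field K] [CharZero K] {B A c : K}
    (hA : A ≠ 0) (hc : c ≠ 0) : C B * rescale c (exp K) - C A ≠ 0 := by
  intro h
  have hB : B = 0 := by
    simpa [coeff_rescale, coeff_C, hc] using congrArg (coeff 1) h
  simp [hB, hA] at h

end PowerSeries

theorem map_evalRingHom_expX (z : ℂ) :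
    PowerSeries.map (evalRingHom z) expX = rescale z (exp ℂ) := by
  ext n
  simp [expX, coeff_rescale, map_inv₀, mul_comm]

theorem coeff_map_evalRingHom_egf (z : ℂ) (Y : ℕ → ℂ[X]) (n : ℕ) :
    coeff n (PowerSeries.map (evalRingHom z) (egf Y)) = (n.factorial : ℂ)⁻¹ * (Y n).eval z := by
  simp [egf]

namespace ApostolFamilyC

variable {k v m : ℕ} {B A : ℂ} {Y Yt : ℕ → ℂ[X]}

theorem map_evalRingHom (hY : ApostolFamilyC k v B A Y) (z : ℂ) :
    (PowerSeries.C B * exp ℂ - PowerSeries.C A) ^ v * PowerSeries.map (evalRingHom z) (egf Y)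
      = (PowerSeries.C ((2 : ℂ) ^ ((1 : ℤ) - k)) * PowerSeries.X ^ k) ^ v * rescale z (exp ℂ) := by
  simpa [map_evalRingHom_expX] using congrArg (PowerSeries.map (evalRingHom z)) hY

theorem rescale_map_evalRingHom (hY : ApostolFamilyC k 1 B A Y) (z c : ℂ) :
    (PowerSeries.C B * rescale c (exp ℂ) - PowerSeries.C A)
        * rescale c (PowerSeries.map (evalRingHom z) (egf Y))
      = PowerSeries.C ((2 : ℂ) ^ ((1 : ℤ) - k) * c ^ k) * PowerSeries.X ^ k
        * rescale (z * c) (exp ℂ) := by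
  have h := congrArg (rescale c) (hY.map_evalRingHom z)
  simp only [pow_one, map_mul, map_sub, map_pow, rescale_C, rescale_X, rescale_rescale] at h
  rw [h, map_mul, map_pow]
  ring

theorem mul_nat_egf (hA : A ≠ 0) (hm : m ≠ 0)
    (hY : ApostolFamilyC k 1 B A Y) (hYt : ApostolFamilyC k 1 (B ^ m) (A ^ m) Yt) (x : ℂ) :
    PowerSeries.C ((m : ℂ) ^ k) * PowerSeries.map (evalRingHom (m * x)) (egf Y)
      = ∑ j ∈ Finset.range m, PowerSeries.C (B ^ j * A ^ (m - 1 - j))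
          * rescale (m : ℂ) (PowerSeries.map (evalRingHom (x + j / m)) (egf Yt)) := by
  have hm' : (m : ℂ) ≠ 0 := Nat.cast_ne_zero.2 hm
  set κ : ℂ := (2 : ℂ) ^ ((1 : ℤ) - k)
  set D := PowerSeries.C (B ^ m) * rescale (m : ℂ) (exp ℂ) - PowerSeries.C (A ^ m)
  have hD : D ≠ 0 := C_mul_rescale_exp_sub_C_ne_zero (pow_ne_zero m hA) hm'
  have hgeom : D = (∑ j ∈ Finset.range m,
      (PowerSeries.C B * exp ℂ) ^ j * PowerSeries.C A ^ (m - 1 - j))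
        * (PowerSeries.C B * exp ℂ - PowerSeries.C A) := by
    rw [geom_sum₂_mul, mul_pow, ← map_pow, ← map_pow, exp_pow_eq_rescale_exp]
  have hYt_j (j : ℕ) : D * rescale (m : ℂ) (PowerSeries.map (evalRingHom (x + j / m)) (egf Yt))
      = PowerSeries.C (κ * m ^ k) * PowerSeries.X ^ k * (rescale (m * x) (exp ℂ) * exp ℂ ^ j) := by
    rw [hYt.rescale_map_evalRingHom, exp_pow_eq_rescale_exp, exp_mul_exp_eq_exp_add]
    congr 3
    field_simp
  have hYmx := hY.map_evalRingHom (m * x)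
  rw [pow_one, pow_one] at hYmx
  apply mul_left_cancel₀ hD
  calc D * (PowerSeries.C ((m : ℂ) ^ k) * PowerSeries.map (evalRingHom (m * x)) (egf Y))
      = PowerSeries.C ((m : ℂ) ^ k) * (∑ j ∈ Finset.range m, (PowerSeries.C B * exp ℂ) ^ j
          * PowerSeries.C A ^ (m - 1 - j))
          * ((PowerSeries.C B * exp ℂ - PowerSeries.C A)
            * PowerSeries.map (evalRingHom (m * x)) (egf Y)) := by
        rw [hgeom]; ring
    _ = ∑ j ∈ Finset.range m, PowerSeries.C (B ^ j * A ^ (m - 1 - j)) * (D * rescale (m : ℂ)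
          (PowerSeries.map (evalRingHom (x + j / m)) (egf Yt))) := by
        rw [hYmx, Finset.mul_sum, Finset.sum_mul]
        refine Finset.sum_congr rfl fun j _ => ?_
        rw [hYt_j]
        simp only [map_mul, map_pow]
        ring
    _ = D * ∑ j ∈ Finset.range m, PowerSeries.C (B ^ j * A ^ (m - 1 - j))
          * rescale (m : ℂ) (PowerSeries.map (evalRingHom (x + j / m)) (egf Yt)) := by
        rw [Finset.mul_sum]
        exact Finset.sum_congr rfl fun j _ => by ring

theorem eval_nat_mul (hA : A ≠ 0) (hm : m ≠ 0)
    (hY : ApostolFamilyC k 1 B A Y) (hYt : ApostolFamilyC k 1 (B ^ m) (A ^ m) Yt) (n : ℕ) (x : ℂ) :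
    (Y n).eval (m * x)
      = (m : ℂ) ^ n / (m : ℂ) ^ k * A ^ (m - 1)
          * ∑ j ∈ Finset.range m, (B / A) ^ j * (Yt n).eval (x + j / m) := by
  have h := congrArg (PowerSeries.coeff n) (hY.mul_nat_egf hA hm hYt x)
  simp only [PowerSeries.coeff_C_mul, map_sum, coeff_rescale, coeff_map_evalRingHom_egf] at h
  have hm' : (m : ℂ) ≠ 0 := Nat.cast_ne_zero.2 hm
  have hn : (n.factorial : ℂ) ≠ 0 := Nat.cast_ne_zero.2 n.factorial_ne_zero
  have hpow {j : ℕ} (hj : j ∈ Finset.range m) :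
      A ^ (m - 1) * (B / A) ^ j = B ^ j * A ^ (m - 1 - j) := by
    rw [div_pow, ← pow_sub_mul_pow A (Nat.le_sub_one_of_lt (Finset.mem_range.1 hj))]
    field_simp
  calc (Y n).eval (m * x)
      = ((m : ℂ) ^ k)⁻¹ * n.factorial
          * ((m : ℂ) ^ k * ((n.factorial : ℂ)⁻¹ * (Y n).eval (m * x))) := by
        field_simp
    _ = _ := by
        rw [h, Finset.mul_sum, Finset.mul_sum]
        refine Finset.sum_congr rfl fun j hj => ?_
        rw [← hpow hj]
        field_simp

end ApostolFamilyC

theorem apostol_multiplication_general (k : ℕ) (a b : ℝ) (β : ℂ)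
    (ha : 0 < a)
    (m : ℕ) (hm : 1 ≤ m)
    (Y Yt : ℕ → Polynomial ℂ)
    (hY : ApostolFamily k 1 a b β Y)
    (hYt : ApostolFamilyC k 1 ((β ^ (b : ℂ)) ^ m) ((((a ^ b : ℝ) : ℂ)) ^ m) Yt)
    (n : ℕ) (x : ℝ) :
    (Y n).eval ((m : ℂ) * (x : ℂ))
      = (m : ℂ) ^ n / (m : ℂ) ^ k * ((a ^ b : ℝ) : ℂ) ^ (m - 1) *
          ∑ j ∈ Finset.range m,
            (β ^ (b : ℂ) / ((a ^ b : ℝ) : ℂ)) ^ j *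
              (Yt n).eval ((x : ℂ) + (j : ℂ) / (m : ℂ)) := by
  have hA : ((a ^ b : ℝ) : ℂ) ≠ 0 := Complex.ofReal_ne_zero.2 (Real.rpow_pos_of_pos ha b).ne'
  exact hY.eval_nat_mul hA (by omega) hYt n x

/-- Raabe-type multiplication formula (order one):
`Y_{n,β}(mx;k,a,b) = m^{n−k} a^{b(m−1)} ∑_{j=0}^{m−1} (β^b/a^b)^j Ỹ_n(x + j/m)`,
where `Ỹ` is the family for the parameters `((β^b)^m, (a^b)^m)`. -/
theorem apostol_multiplication (k : ℕ) (a b : ℝ) (β : ℂ)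
    (ha : 0 < a) (hb : 0 < b) (hβ : β ≠ 0)
    (m : ℕ) (hm : 1 ≤ m)
    (Y Yt : ℕ → Polynomial ℂ)
    (hY : ApostolFamily k 1 a b β Y)
    (hYt : ApostolFamilyC k 1 ((β ^ (b : ℂ)) ^ m) ((((a ^ b : ℝ) : ℂ)) ^ m) Yt)
    (n : ℕ) (x : ℝ) :
    (Y n).eval ((m : ℂ) * (x : ℂ))
      = (m : ℂ) ^ n / (m : ℂ) ^ k * ((a ^ b : ℝ) : ℂ) ^ (m - 1) *
          ∑ j ∈ Finset.range m,
            (β ^ (b : ℂ) / ((a ^ b : ℝ) : ℂ)) ^ j *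
              (Yt n).eval ((x : ℂ) + (j : ℂ) / (m : ℂ)) :=
  apostol_multiplication_general k a b β ha m hm Y Yt hY hYt n x
end

section
/- Suppose k ≥ 1, v ≥ 1 and n ≥ v(k−1). Then the following identity of polynomials in x holds: Y_{n,β}^{(v)}(x;k,a,b) = (−1)^v·((n)_{v(k−1)}/(2^{kv}·a^{bv}))·𝒢_{n−v(k−1)}^{(v)}(x, −β^b/a^b), where 𝒢^{(v)} denotes the Apostol–Genocchi polynomials of order v (the paper writes the prefactor as −1, which agrees with (−1)^v when v is odd). -/
open Polynomial

/-- The defining identity for the Apostol–Genocchi polynomials of order `v`: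
`(λ·e^t + 1)^v · ∑_{n≥0} 𝒢_n^{(v)}(x,λ) tⁿ/n! = (2t)^v·e^{xt}`. -/
def ApostolGenocchiFamily (v : ℕ) (lam : ℂ) (G : ℕ → Polynomial ℂ) : Prop :=
  (PowerSeries.C (R := Polynomial ℂ) (Polynomial.C lam) * PowerSeries.exp (Polynomial ℂ) + 1) ^ v *
      egf G
    = (PowerSeries.C (R := Polynomial ℂ) (Polynomial.C (2 : ℂ)) * PowerSeries.X) ^ v * expX

/-! Since `a^b ≠ 0`, `β^b eᵗ − a^b = −a^b (λ eᵗ + 1)` with `λ = −β^b/a^b`, so both generating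
identities carry the factor `(λ eᵗ + 1)^v`, a nonzero element of the domain `ℂ[x][[t]]`.
Cancelling it leaves `(−2a^b)^v ∑ Yₙ tⁿ/n! = 2^{(1−k)v} t^{v(k−1)} ∑ 𝒢ₙ tⁿ/n!`, and the
coefficient of `tⁿ` is the identity. -/

theorem PowerSeries.C_mul_exp_add_one_ne_zero {R : Type*} [CommRing R] [Algebra ℚ R]
    [Nontrivial R] (c : R) : PowerSeries.C c * PowerSeries.exp R + 1 ≠ 0 := by
  intro h
  have hc : c = 0 := by simpa [PowerSeries.coeff_one] using congrArg (PowerSeries.coeff 1) h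
  have hc1 : c + 1 = 0 := by simpa using congrArg (PowerSeries.coeff 0) h
  simp [hc] at hc1

theorem coeff_egf (Y : ℕ → ℂ[X]) (n : ℕ) :
    PowerSeries.coeff n (egf Y) = (n.factorial : ℂ)⁻¹ • Y n :=
  PowerSeries.coeff_mk _ _

theorem egf_injective : Function.Injective egf := by
  intro Y Z h
  funext n
  have hn := congrArg (PowerSeries.coeff n) h
  rw [coeff_egf, coeff_egf] at hn
  exact smul_right_injective _ (inv_ne_zero (Nat.cast_ne_zero.mpr n.factorial_ne_zero)) hn

theorem C_mul_egf (c : ℂ) (Y : ℕ → ℂ[X]) :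
    PowerSeries.C (Polynomial.C c) * egf Y = egf fun n => c • Y n := by
  ext n : 1
  rw [PowerSeries.coeff_C_mul, coeff_egf, coeff_egf, ← Polynomial.smul_eq_C_mul, smul_comm]

/-- The factor `(n)_m`, zero for `n < m`, absorbs the truncated subtraction `n - m`. -/
theorem X_pow_mul_egf (m : ℕ) (G : ℕ → ℂ[X]) :
    PowerSeries.X ^ m * egf G = egf fun n => (n.descFactorial m : ℂ) • G (n - m) := by
  ext n : 1
  rw [PowerSeries.coeff_X_pow_mul', coeff_egf]
  split_ifs with hmn
  · rw [coeff_egf, smul_smul, ← Nat.factorial_mul_descFactorial hmn]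
    congr 1
    have hfac : ((n - m).factorial : ℂ) ≠ 0 := Nat.cast_ne_zero.mpr (n - m).factorial_ne_zero
    have hdesc : (n.descFactorial m : ℂ) ≠ 0 :=
      Nat.cast_ne_zero.mpr (Nat.descFactorial_eq_zero_iff_lt.not.mpr (not_lt.mpr hmn))
    push_cast
    field_simp
  · rw [coeff_egf, Nat.descFactorial_eq_zero_iff_lt.mpr (not_le.mp hmn)]
    simp

theorem ApostolFamilyC.egf_smul_eq {k v : ℕ} {A B : ℂ} {Y G : ℕ → ℂ[X]} (hk : 1 ≤ k)
    (hA : A ≠ 0) (hY : ApostolFamilyC k v B A Y) (hG : ApostolGenocchiFamily v (-(B / A)) G) :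
    (egf fun n => (-A * 2) ^ v • Y n) = egf fun n => ((2 : ℂ) ^ ((1 : ℤ) - k)) ^ v •
      (n.descFactorial (v * (k - 1)) : ℂ) • G (n - v * (k - 1)) := by
  unfold ApostolFamilyC at hY
  unfold ApostolGenocchiFamily at hG
  have hfactor : PowerSeries.C (Polynomial.C B) * PowerSeries.exp ℂ[X] -
      PowerSeries.C (Polynomial.C A) = PowerSeries.C (Polynomial.C (-A)) *
        (PowerSeries.C (Polynomial.C (-(B / A))) * PowerSeries.exp ℂ[X] + 1) := by
    have hB : PowerSeries.C (Polynomial.C B) = PowerSeries.C (Polynomial.C (-A)) *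
        PowerSeries.C (Polynomial.C (-(B / A))) := by
      rw [← map_mul, ← map_mul, neg_mul_neg, mul_div_cancel₀ B hA]
    rw [hB, map_neg, map_neg]
    ring
  set L := PowerSeries.C (Polynomial.C (-(B / A))) * PowerSeries.exp ℂ[X] + 1
  have hkv : v * k = v * (k - 1) + v := by rw [← Nat.mul_add_one, Nat.sub_add_cancel hk]
  refine mul_left_cancel₀ (pow_ne_zero v (PowerSeries.C_mul_exp_add_one_ne_zero
    (Polynomial.C (-(B / A))))) ?_
  rw [← C_mul_egf, ← C_mul_egf, ← X_pow_mul_egf]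
  calc L ^ v * (PowerSeries.C (Polynomial.C ((-A * 2) ^ v)) * egf Y)
      = PowerSeries.C (Polynomial.C 2) ^ v * ((PowerSeries.C (Polynomial.C B) *
          PowerSeries.exp ℂ[X] - PowerSeries.C (Polynomial.C A)) ^ v * egf Y) := by
        rw [hfactor]
        simp only [mul_pow, map_pow, map_mul]
        ring
    _ = PowerSeries.C (Polynomial.C (((2 : ℂ) ^ ((1 : ℤ) - k)) ^ v)) *
          PowerSeries.X ^ (v * (k - 1)) *
          ((PowerSeries.C (Polynomial.C 2) * PowerSeries.X) ^ v * expX) := by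
        rw [hY, mul_pow, mul_pow, ← pow_mul', hkv]
        simp only [map_pow]
        ring
    _ = L ^ v * (PowerSeries.C (Polynomial.C (((2 : ℂ) ^ ((1 : ℤ) - k)) ^ v)) *
          (PowerSeries.X ^ (v * (k - 1)) * egf G)) := by
        rw [← hG]
        ring

theorem ApostolFamilyC.eq_C_mul_apostolGenocchi {k v : ℕ} {A B : ℂ} {Y G : ℕ → ℂ[X]}
    (hk : 1 ≤ k) (hA : A ≠ 0) (hY : ApostolFamilyC k v B A Y)
    (hG : ApostolGenocchiFamily v (-(B / A)) G) (n : ℕ) :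
    Y n = Polynomial.C ((-1 : ℂ) ^ v * (n.descFactorial (v * (k - 1)) : ℂ) /
        ((2 : ℂ) ^ (k * v) * A ^ v)) * G (n - v * (k - 1)) := by
  have hn := congrFun (egf_injective (hY.egf_smul_eq hk hA hG)) n
  have hu : (-A * 2) ^ v ≠ 0 := pow_ne_zero v (mul_ne_zero (neg_ne_zero.mpr hA) two_ne_zero)
  rw [← Polynomial.smul_eq_C_mul]
  refine smul_right_injective ℂ[X] hu ?_
  simp only at hn ⊢
  rw [hn, smul_smul, smul_smul, zpow_sub₀ two_ne_zero, zpow_one, zpow_natCast]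
  congr 1
  rw [mul_div_assoc, ← mul_assoc, ← mul_pow, show -A * 2 * -1 = A * 2 by ring, pow_mul,
    div_pow, mul_pow]
  field_simp

theorem apostol_eq_apostolGenocchi_general (k v : ℕ) (a b : ℝ) (β : ℂ)
    (ha : 0 < a) (hk : 1 ≤ k)
    (Y G : ℕ → Polynomial ℂ)
    (hY : ApostolFamily k v a b β Y)
    (hG : ApostolGenocchiFamily v (-(β ^ (b : ℂ) / ((a ^ b : ℝ) : ℂ))) G)
    (n : ℕ) :
    Y n = Polynomial.C ((-1 : ℂ) ^ v * (n.descFactorial (v * (k - 1)) : ℂ) /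
        ((2 : ℂ) ^ (k * v) * ((a ^ b : ℝ) : ℂ) ^ v)) * G (n - v * (k - 1)) :=
  ApostolFamilyC.eq_C_mul_apostolGenocchi hk
    (Complex.ofReal_ne_zero.mpr (Real.rpow_pos_of_pos ha b).ne') hY hG n

/-- For `k ≥ 1`, `v ≥ 1` and `n ≥ v(k−1)`:
`Y_{n,β}^{(v)}(x;k,a,b) = (−1)^v ((n)_{v(k−1)}/(2^{kv} a^{bv})) 𝒢_{n−v(k−1)}^{(v)}(x, −β^b/a^b)`. -/
theorem apostol_eq_apostolGenocchi (k v : ℕ) (a b : ℝ) (β : ℂ)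
    (ha : 0 < a) (hb : 0 < b) (hβ : β ≠ 0) (hk : 1 ≤ k) (hv : 1 ≤ v)
    (Y G : ℕ → Polynomial ℂ)
    (hY : ApostolFamily k v a b β Y)
    (hG : ApostolGenocchiFamily v (-(β ^ (b : ℂ) / ((a ^ b : ℝ) : ℂ))) G)
    (n : ℕ) (hn : v * (k - 1) ≤ n) :
    Y n = Polynomial.C ((-1 : ℂ) ^ v * (n.descFactorial (v * (k - 1)) : ℂ) /
        ((2 : ℂ) ^ (k * v) * ((a ^ b : ℝ) : ℂ) ^ v)) * G (n - v * (k - 1)) :=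
  apostol_eq_apostolGenocchi_general k v a b β ha hk Y G hY hG n
end
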